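/- For θ ∈ ℝ let D_θ = cosh(θ/2) • I₄ + sinh(θ/2) • (Γ_p Γ_q) and D_θ' = cosh(θ/2) • I₄ − sinh(θ/2) • (Γ_p Γ_q). Then (Γ_p Γ_q)² = I₄, D_θ D_θ' = I₄, D_θ Γ_c D_θ' = Γ_c for every c ∈ {t, x, y, z}, and for all real p, q: D_θ (p•Γ_p + q•Γ_q) D_θ' = (p cosh θ + q sinh θ)•Γ_p + (q cosh θ + p sinh θ)•Γ_q. In particular the transformed coefficients satisfy p' + q' = e^θ (p + q) (the action is a dilation). -/

import Mathlib

/-!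
`J = Γ_p Γ_q` is the diagonal matrix with entries `-L`, so `J² = 1` and
`D_θ = cosh(θ/2) + sinh(θ/2) J` behaves like `exp(θ J / 2)`. Since `L` commutes with `1`, `ℓ` and
itself, `J` commutes with `Γ_t, Γ_x, Γ_y, Γ_z`, which are therefore fixed. Since `L` anticommutes
with `K` and `KL`, `J` anticommutes with `Γ_p, Γ_q` and swaps them; for such `X` one has
`D_θ X = X D_θ'`, so conjugation by `D_θ` acts as multiplication by
`D_θ² = cosh θ + sinh θ J`, a hyperbolic rotation of the `pq`-plane.
-/

open Quaternion Matrix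

/-- The split quaternions, with K = i, L = j, KL = k. -/
notation "ℍ'" => QuaternionAlgebra ℝ (-1) 0 1

/-- A = ℍ' ⊗_ℝ ℂ, realized as the quaternion algebra over ℂ with i² = −1, j² = 1. -/
abbrev SplitQC := QuaternionAlgebra ℂ (-1) 0 1

namespace SplitQC
/-- K, the split-quaternion unit with K² = −1 -/
def K : SplitQC := ⟨0, 1, 0, 0⟩
/-- L, the split-quaternion unit with L² = 1 -/
def L : SplitQC := ⟨0, 0, 1, 0⟩
/-- KL, with (KL)² = 1 -/
def KL : SplitQC := ⟨0, 0, 0, 1⟩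
/-- ℓ = 1 ⊗ i, the complex unit -/
def ll : SplitQC := ⟨Complex.I, 0, 0, 0⟩
end SplitQC

open SplitQC

/-- Index set {x, y, z, t, q, p} for the gamma matrices. -/
inductive Idx | x | y | z | t | q | p
deriving DecidableEq

/-- The gamma matrices generating Cl(4,2). -/
def Γ : Idx → Matrix (Fin 4) (Fin 4) SplitQC
| Idx.x => !![0,0,0,1; 0,0,1,0; 0,1,0,0; 1,0,0,0]
| Idx.y => !![0,0,0,-ll; 0,0,ll,0; 0,-ll,0,0; ll,0,0,0]
| Idx.z => !![0,0,1,0; 0,0,0,-1; 1,0,0,0; 0,-1,0,0]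
| Idx.t => !![0,0,L,0; 0,0,0,L; -L,0,0,0; 0,-L,0,0]
| Idx.q => !![0,0,K,0; 0,0,0,K; -K,0,0,0; 0,-K,0,0]
| Idx.p => !![0,0,KL,0; 0,0,0,KL; -KL,0,0,0; 0,-KL,0,0]

/-- The metric of signature (4,2). -/
def g : Idx → Idx → ℝ
| Idx.x, Idx.x => 1 | Idx.y, Idx.y => 1 | Idx.z, Idx.z => 1 | Idx.q, Idx.q => 1
| Idx.t, Idx.t => -1 | Idx.p, Idx.p => -1
| _, _ => 0

namespace SplitQC

lemma L_mul_L : L * L = 1 := by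
  ext <;> simp [L]

lemma L_mul_K : L * K = -KL := by
  ext <;> simp [K, L, KL]

lemma L_mul_KL : L * KL = -K := by
  ext <;> simp [K, L, KL]

lemma KL_mul_K : KL * K = L := by
  ext <;> simp [K, L, KL]

lemma K_mul_L : K * L = KL := by
  ext <;> simp [K, L, KL]

lemma KL_mul_L : KL * L = K := by
  ext <;> simp [K, L, KL]

lemma commute_L_ll : Commute L ll := by
  ext <;> simp [L, ll]

end SplitQC

namespace Matrix

variable {n α : Type*} [Fintype n] [DecidableEq n]

lemma commute_diagonal_const [NonUnitalNonAssocSemiring α] {a : α} {M : Matrix n n α}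
    (h : ∀ i j, Commute a (M i j)) :
    Commute (diagonal fun _ => a) M := by
  ext i j
  simp [diagonal_mul, mul_diagonal, (h i j).eq]

lemma mul_diagonal_const_eq_neg [NonUnitalNonAssocRing α] {a : α} {M : Matrix n n α}
    (h : ∀ i j, M i j * a = -(a * M i j)) :
    M * diagonal (fun _ => a) = -(diagonal (fun _ => a) * M) := by
  ext i j
  simp [diagonal_mul, mul_diagonal, h i j]

end Matrix

section Boost

variable {R A : Type*} [CommRing R] [Ring A] [Algebra R A] (c s : R) {J X : A}

lemma boost_mul_boost_neg (hJ : J * J = 1) :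
    (c • 1 + s • J) * (c • 1 - s • J) = (c ^ 2 - s ^ 2) • (1 : A) := by
  simp only [mul_sub, add_mul, smul_mul_smul_comm, one_mul, mul_one, hJ, mul_comm s c]
  module

lemma boost_conj_of_commute (hJ : J * J = 1) (hX : Commute J X) :
    (c • 1 + s • J) * X * (c • 1 - s • J) = (c ^ 2 - s ^ 2) • X := by
  have hX' : Commute (c • 1 + s • J) X :=
    ((Commute.one_left X).smul_left c).add_left (hX.smul_left s)
  rw [hX'.eq, mul_assoc, boost_mul_boost_neg c s hJ, mul_smul_comm, mul_one]

lemma boost_conj_of_anticommute (hJ : J * J = 1) (hX : X * J = -(J * X)) :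
    (c • 1 + s • J) * X * (c • 1 - s • J) = (c ^ 2 + s ^ 2) • X + (2 * c * s) • (J * X) := by
  have hX' : (c • 1 + s • J) * X = X * (c • 1 - s • J) := by
    simp only [add_mul, mul_sub, smul_mul_assoc, mul_smul_comm, one_mul, mul_one, hX, smul_neg,
      sub_neg_eq_add]
  rw [hX', mul_assoc]
  simp only [mul_sub, sub_mul, mul_smul_comm, smul_mul_assoc, one_mul, mul_one, hJ, hX]
  module

end Boost

lemma Γ_p_mul_Γ_q : Γ Idx.p * Γ Idx.q = diagonal fun _ => -L := by
  ext i j : 1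
  fin_cases i <;> fin_cases j <;> simp [Γ, Matrix.mul_apply, Fin.sum_univ_four, KL_mul_K]

lemma Γ_p_mul_Γ_q_mul_self : Γ Idx.p * Γ Idx.q * (Γ Idx.p * Γ Idx.q) = 1 := by
  rw [Γ_p_mul_Γ_q, diagonal_mul_diagonal, neg_mul_neg, L_mul_L, diagonal_one]

lemma commute_Γ_p_mul_Γ_q {c : Idx} (hc : c = Idx.t ∨ c = Idx.x ∨ c = Idx.y ∨ c = Idx.z) :
    Commute (Γ Idx.p * Γ Idx.q) (Γ c) := by
  rw [Γ_p_mul_Γ_q]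
  refine Matrix.commute_diagonal_const fun i j => ?_
  rcases hc with rfl | rfl | rfl | rfl <;> fin_cases i <;> fin_cases j <;>
    simp [Γ, commute_L_ll]

lemma Γ_p_mul_Γ_q_mul_Γ_p : Γ Idx.p * Γ Idx.q * Γ Idx.p = Γ Idx.q := by
  ext i j : 1
  rw [Γ_p_mul_Γ_q, diagonal_mul]
  fin_cases i <;> fin_cases j <;> simp [Γ, L_mul_KL]

lemma Γ_p_mul_Γ_q_mul_Γ_q : Γ Idx.p * Γ Idx.q * Γ Idx.q = Γ Idx.p := by
  ext i j : 1
  rw [Γ_p_mul_Γ_q, diagonal_mul]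
  fin_cases i <;> fin_cases j <;> simp [Γ, L_mul_K]

lemma Γ_p_mul_Γ_p_mul_Γ_q : Γ Idx.p * (Γ Idx.p * Γ Idx.q) = -(Γ Idx.p * Γ Idx.q * Γ Idx.p) := by
  rw [Γ_p_mul_Γ_q]
  refine Matrix.mul_diagonal_const_eq_neg fun i j => ?_
  fin_cases i <;> fin_cases j <;> simp [Γ, L_mul_KL, KL_mul_L]

lemma Γ_q_mul_Γ_p_mul_Γ_q : Γ Idx.q * (Γ Idx.p * Γ Idx.q) = -(Γ Idx.p * Γ Idx.q * Γ Idx.q) := by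
  rw [Γ_p_mul_Γ_q]
  refine Matrix.mul_diagonal_const_eq_neg fun i j => ?_
  fin_cases i <;> fin_cases j <;> simp [Γ, L_mul_K, K_mul_L]

/-- The dilation D_θ = cosh(θ/2) I + sinh(θ/2) Γ_p Γ_q: (Γ_p Γ_q)² = I, D_θ D_θ' = I,
D_θ fixes Γ_t, Γ_x, Γ_y, Γ_z, boosts the pq-plane, and rescales p + q by e^θ. -/
theorem dilation_action (θ p q : ℝ) :
    let D := Real.cosh (θ / 2) • (1 : Matrix (Fin 4) (Fin 4) SplitQC) +
      Real.sinh (θ / 2) • (Γ Idx.p * Γ Idx.q)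
    let D' := Real.cosh (θ / 2) • (1 : Matrix (Fin 4) (Fin 4) SplitQC) -
      Real.sinh (θ / 2) • (Γ Idx.p * Γ Idx.q)
    (Γ Idx.p * Γ Idx.q) ^ 2 = (1 : Matrix (Fin 4) (Fin 4) SplitQC) ∧
    D * D' = 1 ∧
    (∀ c : Idx, c = Idx.t ∨ c = Idx.x ∨ c = Idx.y ∨ c = Idx.z → D * Γ c * D' = Γ c) ∧
    (D * (p • Γ Idx.p + q • Γ Idx.q) * D' =
      (p * Real.cosh θ + q * Real.sinh θ) • Γ Idx.p +
      (q * Real.cosh θ + p * Real.sinh θ) • Γ Idx.q) ∧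
    ((p * Real.cosh θ + q * Real.sinh θ) + (q * Real.cosh θ + p * Real.sinh θ) =
      Real.exp θ * (p + q)) := by
  dsimp only
  have hJ := Γ_p_mul_Γ_q_mul_self
  have hdet : Real.cosh (θ / 2) ^ 2 - Real.sinh (θ / 2) ^ 2 = 1 := Real.cosh_sq_sub_sinh_sq _
  have hcosh : Real.cosh (θ / 2) ^ 2 + Real.sinh (θ / 2) ^ 2 = Real.cosh θ := by
    rw [← Real.cosh_two_mul, mul_div_cancel₀ θ two_ne_zero]
  have hsinh : 2 * Real.cosh (θ / 2) * Real.sinh (θ / 2) = Real.sinh θ := by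
    rw [mul_right_comm, ← Real.sinh_two_mul, mul_div_cancel₀ θ two_ne_zero]
  have hX : (p • Γ Idx.p + q • Γ Idx.q) * (Γ Idx.p * Γ Idx.q) =
      -(Γ Idx.p * Γ Idx.q * (p • Γ Idx.p + q • Γ Idx.q)) := by
    simp only [add_mul, mul_add, smul_mul_assoc, mul_smul_comm, Γ_p_mul_Γ_p_mul_Γ_q,
      Γ_q_mul_Γ_p_mul_Γ_q, smul_neg, neg_add]
  refine ⟨sq (Γ Idx.p * Γ Idx.q) ▸ hJ, ?_, fun c hc => ?_, ?_, ?_⟩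
  · rw [boost_mul_boost_neg _ _ hJ, hdet, one_smul]
  · rw [boost_conj_of_commute _ _ hJ (commute_Γ_p_mul_Γ_q hc), hdet, one_smul]
  · rw [boost_conj_of_anticommute _ _ hJ hX, hcosh, hsinh, mul_add, mul_smul_comm, mul_smul_comm,
      Γ_p_mul_Γ_q_mul_Γ_p, Γ_p_mul_Γ_q_mul_Γ_q]
    module
  · rw [← Real.cosh_add_sinh]
    ring
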